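/- arXiv:1607.06079 — 4 statements merged into one kernel-verified Lean document; each statement's English description precedes it below -/
import Mathlib

section
/- If u, v : ℝ² → ℝ are twice continuously differentiable and satisfy the Bäcklund system u_x + v_x = √2·exp((u−v)/2) and u_t − v_t = √2·exp((u+v)/2), then u satisfies the Liouville equation u_xt = exp(u) and v satisfies v_xt = 0. -/
/-- Partial derivative with respect to the first variable (x). -/
noncomputable def px (f : ℝ → ℝ → ℝ) (x t : ℝ) : ℝ :=
  deriv (fun x' => f x' t) x

/-- Partial derivative with respect to the second variable (t). -/
noncomputable def pt (f : ℝ → ℝ → ℝ) (x t : ℝ) : ℝ :=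
  deriv (fun t' => f x t') t

/-!
With `s = u + v` and `d = u - v` the system reads `s_x = √2 e^{d/2}`, `d_t = √2 e^{s/2}`.
Differentiating the first equation in `t` and substituting the second gives `s_xt = e^u`;
differentiating the second in `x` and substituting the first gives `d_tx = e^u`.
As mixed partials of a `C²` function commute, `u_xt = (s_xt + d_xt) / 2 = e^u` and
`v_xt = (s_xt - d_xt) / 2 = 0`.
-/

open Function Real

section Partials

variable {f : ℝ → ℝ → ℝ} {x t : ℝ}

lemma hasDerivAt_px (hf : DifferentiableAt ℝ (uncurry f) (x, t)) :
    HasDerivAt (fun x' => f x' t) (px f x t) x :=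
  (hf.comp (f := fun x' => (x', t)) x
    (differentiableAt_fun_id.prodMk (differentiableAt_const t)) :).hasDerivAt

lemma hasDerivAt_pt (hf : DifferentiableAt ℝ (uncurry f) (x, t)) :
    HasDerivAt (fun t' => f x t') (pt f x t) t :=
  (hf.comp (f := fun t' => (x, t')) t
    ((differentiableAt_const x).prodMk differentiableAt_fun_id) :).hasDerivAt

lemma px_eq_fderiv (hf : DifferentiableAt ℝ (uncurry f) (x, t)) :
    px f x t = fderiv ℝ (uncurry f) (x, t) (1, 0) :=
  (hf.hasFDerivAt.comp_hasDerivAt x ((hasDerivAt_id' x).prodMk (hasDerivAt_const x t)) :).deriv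

lemma pt_eq_fderiv (hf : DifferentiableAt ℝ (uncurry f) (x, t)) :
    pt f x t = fderiv ℝ (uncurry f) (x, t) (0, 1) :=
  (hf.hasFDerivAt.comp_hasDerivAt t ((hasDerivAt_const t x).prodMk (hasDerivAt_id' t)) :).deriv

lemma uncurry_px (hf : Differentiable ℝ (uncurry f)) :
    uncurry (px f) = fun p => fderiv ℝ (uncurry f) p (1, 0) :=
  funext fun p => px_eq_fderiv (hf p)

lemma uncurry_pt (hf : Differentiable ℝ (uncurry f)) :
    uncurry (pt f) = fun p => fderiv ℝ (uncurry f) p (0, 1) :=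
  funext fun p => pt_eq_fderiv (hf p)

lemma ContDiff.uncurry_px {m n : WithTop ℕ∞} (hf : ContDiff ℝ n (uncurry f))
    (hmn : m + 1 ≤ n) :
    ContDiff ℝ m (uncurry (px f)) := by
  rw [_root_.uncurry_px (hf.differentiable (by rintro rfl; simp at hmn))]
  exact (hf.fderiv_right hmn).clm_apply contDiff_const

lemma ContDiff.uncurry_pt {m n : WithTop ℕ∞} (hf : ContDiff ℝ n (uncurry f))
    (hmn : m + 1 ≤ n) :
    ContDiff ℝ m (uncurry (pt f)) := by
  rw [_root_.uncurry_pt (hf.differentiable (by rintro rfl; simp at hmn))]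
  exact (hf.fderiv_right hmn).clm_apply contDiff_const

lemma pt_px_eq_fderiv_fderiv (hf : ContDiff ℝ 2 (uncurry f)) :
    pt (px f) x t = fderiv ℝ (fderiv ℝ (uncurry f)) (x, t) (0, 1) (1, 0) := by
  have hD : Differentiable ℝ (fderiv ℝ (uncurry f)) :=
    (hf.fderiv_right (m := 1) le_rfl).differentiable one_ne_zero
  rw [pt_eq_fderiv ((hf.uncurry_px (m := 1) le_rfl).differentiable one_ne_zero _),
    _root_.uncurry_px (hf.differentiable two_ne_zero),
    fderiv_clm_apply (hD _) (differentiableAt_const _)]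
  simp only [fderiv_fun_const, Pi.zero_apply, ContinuousLinearMap.comp_zero, zero_add,
    ContinuousLinearMap.flip_apply]

lemma px_pt_eq_fderiv_fderiv (hf : ContDiff ℝ 2 (uncurry f)) :
    px (pt f) x t = fderiv ℝ (fderiv ℝ (uncurry f)) (x, t) (1, 0) (0, 1) := by
  have hD : Differentiable ℝ (fderiv ℝ (uncurry f)) :=
    (hf.fderiv_right (m := 1) le_rfl).differentiable one_ne_zero
  rw [px_eq_fderiv ((hf.uncurry_pt (m := 1) le_rfl).differentiable one_ne_zero _),
    _root_.uncurry_pt (hf.differentiable two_ne_zero),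
    fderiv_clm_apply (hD _) (differentiableAt_const _)]
  simp only [fderiv_fun_const, Pi.zero_apply, ContinuousLinearMap.comp_zero, zero_add,
    ContinuousLinearMap.flip_apply]

lemma pt_px_eq_px_pt (hf : ContDiff ℝ 2 (uncurry f)) : pt (px f) x t = px (pt f) x t := by
  rw [pt_px_eq_fderiv_fderiv hf, px_pt_eq_fderiv_fderiv hf]
  exact (hf.contDiffAt.isSymmSndFDerivAt (by simp [minSmoothness_of_isRCLikeNormedField])).eq _ _

end Partials

lemma deriv_eq_exp_of_eq_sqrt_two_mul_exp {F g : ℝ → ℝ} {y c : ℝ}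
    (hF : ∀ y, F y = √2 * exp (g y / 2)) (hg : HasDerivAt g (√2 * exp (c / 2)) y) :
    deriv F y = exp ((g y + c) / 2) := by
  rw [funext hF, ((hg.div_const 2).exp.const_mul √2).deriv]
  calc √2 * (exp (g y / 2) * (√2 * exp (c / 2) / 2))
      = (√2 * √2) * (exp (g y / 2) * exp (c / 2)) / 2 := by ring
    _ = exp ((g y + c) / 2) := by
      rw [mul_self_sqrt zero_le_two, ← exp_add, add_div]; ring

section Backlund

variable {u v : ℝ → ℝ → ℝ}

lemma pt_px_add_pt_px_eq_exp (hu : ContDiff ℝ 2 (uncurry u)) (hv : ContDiff ℝ 2 (uncurry v))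
    (hBT1 : ∀ x t, px u x t + px v x t = √2 * exp ((u x t - v x t) / 2))
    (hBT2 : ∀ x t, pt u x t - pt v x t = √2 * exp ((u x t + v x t) / 2)) (x t : ℝ) :
    pt (px u) x t + pt (px v) x t = exp (u x t) := by
  have hdt : HasDerivAt (fun t' => u x t' - v x t') (√2 * exp ((u x t + v x t) / 2)) t := by
    rw [← hBT2]
    exact (hasDerivAt_pt (hu.differentiable two_ne_zero _)).sub
      (hasDerivAt_pt (hv.differentiable two_ne_zero _))
  calc pt (px u) x t + pt (px v) x t = deriv (fun t' => px u x t' + px v x t') t :=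
        ((hasDerivAt_pt ((hu.uncurry_px (m := 1) le_rfl).differentiable one_ne_zero _)).add
          (hasDerivAt_pt ((hv.uncurry_px (m := 1) le_rfl).differentiable one_ne_zero _))).deriv.symm
    _ = exp ((u x t - v x t + (u x t + v x t)) / 2) :=
        deriv_eq_exp_of_eq_sqrt_two_mul_exp (hBT1 x) hdt
    _ = exp (u x t) := by ring_nf

lemma pt_px_sub_pt_px_eq_exp (hu : ContDiff ℝ 2 (uncurry u)) (hv : ContDiff ℝ 2 (uncurry v))
    (hBT1 : ∀ x t, px u x t + px v x t = √2 * exp ((u x t - v x t) / 2))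
    (hBT2 : ∀ x t, pt u x t - pt v x t = √2 * exp ((u x t + v x t) / 2)) (x t : ℝ) :
    pt (px u) x t - pt (px v) x t = exp (u x t) := by
  have hdx : HasDerivAt (fun x' => u x' t + v x' t) (√2 * exp ((u x t - v x t) / 2)) x := by
    rw [← hBT1]
    exact (hasDerivAt_px (hu.differentiable two_ne_zero _)).add
      (hasDerivAt_px (hv.differentiable two_ne_zero _))
  calc pt (px u) x t - pt (px v) x t = px (pt u) x t - px (pt v) x t := by
        rw [pt_px_eq_px_pt hu, pt_px_eq_px_pt hv]
    _ = deriv (fun x' => pt u x' t - pt v x' t) x :=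
        ((hasDerivAt_px ((hu.uncurry_pt (m := 1) le_rfl).differentiable one_ne_zero _)).sub
          (hasDerivAt_px ((hv.uncurry_pt (m := 1) le_rfl).differentiable one_ne_zero _))).deriv.symm
    _ = exp ((u x t + v x t + (u x t - v x t)) / 2) :=
        deriv_eq_exp_of_eq_sqrt_two_mul_exp (fun x' => hBT2 x' t) hdx
    _ = exp (u x t) := by ring_nf

end Backlund

theorem stmt_5 (u v : ℝ → ℝ → ℝ)
    (hu : ContDiff ℝ 2 (Function.uncurry u))
    (hv : ContDiff ℝ 2 (Function.uncurry v))
    (hBT1 : ∀ x t, px u x t + px v x t = Real.sqrt 2 * Real.exp ((u x t - v x t) / 2))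
    (hBT2 : ∀ x t, pt u x t - pt v x t = Real.sqrt 2 * Real.exp ((u x t + v x t) / 2)) :
    (∀ x t, pt (px u) x t = Real.exp (u x t)) ∧ (∀ x t, pt (px v) x t = 0) := by
  have hsum := pt_px_add_pt_px_eq_exp hu hv hBT1 hBT2
  have hdiff := pt_px_sub_pt_px_eq_exp hu hv hBT1 hBT2
  exact ⟨fun x t => by linarith [hsum x t, hdiff x t],
    fun x t => by linarith [hsum x t, hdiff x t]⟩
end

section
/- For any constants C > 0 and a ≠ 0, the function u(x,t) = 4·arctan(C·exp(a·x + t/a)) satisfies u_x = 2a·sin(u/2) and u_t = (2/a)·sin(u/2). -/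
/-!
Write `u = F (a x + t / a)` with `F s = 4 arctan (C eˢ)`. With `E = C eˢ`,
`F' s = 4 E / (1 + E²) = 2 sin (2 arctan E) = 2 sin (F s / 2)`,
and the chain rule through the affine map contributes the factor `a`, resp. `1 / a`.
-/

open Real

lemma sin_two_mul_arctan (y : ℝ) : sin (2 * arctan y) = 2 * y / (1 + y ^ 2) := by
  have hpos : 0 < 1 + y ^ 2 := by positivity
  rw [sin_two_mul, sin_arctan, cos_arctan]
  field_simp
  rw [sq_sqrt hpos.le]

lemma hasDerivAt_four_mul_arctan_mul_exp (C s : ℝ) :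
    HasDerivAt (fun s => 4 * arctan (C * exp s))
      (2 * sin (4 * arctan (C * exp s) / 2)) s := by
  have hderiv := (((hasDerivAt_exp s).const_mul C).arctan).const_mul 4
  refine hderiv.congr_deriv ?_
  rw [show 4 * arctan (C * exp s) / 2 = 2 * arctan (C * exp s) by ring, sin_two_mul_arctan]
  ring

theorem stmt_10_general (a C : ℝ) (u : ℝ → ℝ → ℝ)
    (hu : u = fun x t => 4 * Real.arctan (C * Real.exp (a * x + t / a))) :
    (∀ x t, px u x t = 2 * a * Real.sin (u x t / 2)) ∧
    (∀ x t, pt u x t = (2 / a) * Real.sin (u x t / 2)) := by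
  subst hu
  have hF (s : ℝ) := hasDerivAt_four_mul_arctan_mul_exp C s
  refine ⟨fun x t => ?_, fun x t => ?_⟩
  · have hx : HasDerivAt (fun x => a * x + t / a) a x := by
      simpa using ((hasDerivAt_id x).const_mul a).add_const (t / a)
    refine ((hF _).comp x hx).deriv.trans ?_
    ring
  · have ht : HasDerivAt (fun t => a * x + t / a) (1 / a) t := by
      simpa using ((hasDerivAt_id t).div_const a).const_add (a * x)
    refine ((hF _).comp t ht).deriv.trans ?_
    ring

theorem stmt_10 (a C : ℝ) (ha : a ≠ 0) (hC : C > 0) (u : ℝ → ℝ → ℝ)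
    (hu : u = fun x t => 4 * Real.arctan (C * Real.exp (a * x + t / a))) :
    (∀ x t, px u x t = 2 * a * Real.sin (u x t / 2)) ∧
    (∀ x t, pt u x t = (2 / a) * Real.sin (u x t / 2)) :=
  stmt_10_general a C u hu
end

section
/- Let g : ℝ² → GL(n, ℂ) be smooth and satisfy the chiral field equation (g⁻¹g_x)_x + (g⁻¹g_t)_t = 0. If Φ, Φ' : ℝ² → M_n(ℂ) are smooth and satisfy the Bäcklund system Φ'_x = Φ_t + [g⁻¹g_t, Φ] and −Φ'_t = Φ_x + [g⁻¹g_x, Φ], then Φ satisfies the symmetry condition Φ_xx + Φ_tt + [g⁻¹g_x, Φ_x] + [g⁻¹g_t, Φ_t] = 0. -/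
open Matrix

variable {n : ℕ}

/-- Entrywise partial derivative with respect to `x` of a matrix-valued function. -/
noncomputable def pX (f : ℝ → ℝ → Matrix (Fin n) (Fin n) ℂ) (x t : ℝ) :
    Matrix (Fin n) (Fin n) ℂ :=
  Matrix.of fun i j => deriv (fun x' => f x' t i j) x

/-- Entrywise partial derivative with respect to `t` of a matrix-valued function. -/
noncomputable def pT (f : ℝ → ℝ → Matrix (Fin n) (Fin n) ℂ) (x t : ℝ) :
    Matrix (Fin n) (Fin n) ℂ :=
  Matrix.of fun i j => deriv (fun t' => f x t' i j) t

/-- Commutator of matrices. -/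
noncomputable def mcomm (A B : Matrix (Fin n) (Fin n) ℂ) : Matrix (Fin n) (Fin n) ℂ := A * B - B * A

noncomputable section

namespace Aux18



/-- slice smoothness -/
lemma slice1 {F : ℝ × ℝ → ℂ} (hF : ContDiff ℝ (⊤ : ℕ∞) F) (t : ℝ) :
    ContDiff ℝ (⊤ : ℕ∞) (fun x' => F (x', t)) :=
  hF.comp (contDiff_id.prodMk contDiff_const)

lemma slice2 {F : ℝ × ℝ → ℂ} (hF : ContDiff ℝ (⊤ : ℕ∞) F) (x : ℝ) :
    ContDiff ℝ (⊤ : ℕ∞) (fun t' => F (x, t')) :=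
  hF.comp (contDiff_const.prodMk contDiff_id)

lemma pderiv1_eq {F : ℝ × ℝ → ℂ} (hF : ContDiff ℝ (⊤ : ℕ∞) F) (x t : ℝ) :
    deriv (fun x' => F (x', t)) x = fderiv ℝ F (x, t) (1, 0) := by
  have hd : HasFDerivAt (fun x' : ℝ => (x', t))
      ((ContinuousLinearMap.id ℝ ℝ).prod 0) x :=
    HasFDerivAt.prodMk (hasFDerivAt_id x) (hasFDerivAt_const t x)
  have h2 := (hF.differentiable (by simp) (x, t)).hasFDerivAt
  have h3 := (h2.comp x hd).hasDerivAt
  simpa [Function.comp_def] using h3.deriv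

lemma pderiv2_eq {F : ℝ × ℝ → ℂ} (hF : ContDiff ℝ (⊤ : ℕ∞) F) (x t : ℝ) :
    deriv (fun t' => F (x, t')) t = fderiv ℝ F (x, t) (0, 1) := by
  have hd : HasFDerivAt (fun t' : ℝ => (x, t'))
      ((0 : ℝ →L[ℝ] ℝ).prod (ContinuousLinearMap.id ℝ ℝ)) t :=
    HasFDerivAt.prodMk (hasFDerivAt_const x t) (hasFDerivAt_id t)
  have h2 := (hF.differentiable (by simp) (x, t)).hasFDerivAt
  have h3 := (h2.comp t hd).hasDerivAt
  simpa [Function.comp_def] using h3.deriv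

lemma contDiff_fderiv_apply {F : ℝ × ℝ → ℂ} (hF : ContDiff ℝ (⊤ : ℕ∞) F) (v : ℝ × ℝ) :
    ContDiff ℝ (⊤ : ℕ∞) (fun p => fderiv ℝ F p v) :=
  (ContinuousLinearMap.apply ℝ ℂ v).contDiff.comp (hF.fderiv_right (by simp))

lemma contDiff_pd1 {F : ℝ × ℝ → ℂ} (hF : ContDiff ℝ (⊤ : ℕ∞) F) :
    ContDiff ℝ (⊤ : ℕ∞) (fun p : ℝ × ℝ => deriv (fun x' => F (x', p.2)) p.1) := by
  have : (fun p : ℝ × ℝ => deriv (fun x' => F (x', p.2)) p.1)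
      = fun p => fderiv ℝ F p (1, 0) := funext fun p => pderiv1_eq hF p.1 p.2
  rw [this]; exact contDiff_fderiv_apply hF (1, 0)

lemma contDiff_pd2 {F : ℝ × ℝ → ℂ} (hF : ContDiff ℝ (⊤ : ℕ∞) F) :
    ContDiff ℝ (⊤ : ℕ∞) (fun p : ℝ × ℝ => deriv (fun t' => F (p.1, t')) p.2) := by
  have : (fun p : ℝ × ℝ => deriv (fun t' => F (p.1, t')) p.2)
      = fun p => fderiv ℝ F p (0, 1) := funext fun p => pderiv2_eq hF p.1 p.2
  rw [this]; exact contDiff_fderiv_apply hF (0, 1)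

lemma clairaut {F : ℝ × ℝ → ℂ} (hF : ContDiff ℝ (⊤ : ℕ∞) F) (x t : ℝ) :
    deriv (fun t' => deriv (fun x' => F (x', t')) x) t
      = deriv (fun x' => deriv (fun t' => F (x', t')) t) x := by
  have hG : ContDiff ℝ (⊤ : ℕ∞) (fun p => fderiv ℝ F p) := hF.fderiv_right (by simp)
  have hdiffG : DifferentiableAt ℝ (fun p => fderiv ℝ F p) (x, t) :=
    (hG.differentiable (by simp)) (x, t)
  have hfd : ∀ v : ℝ × ℝ, fderiv ℝ (fun p => fderiv ℝ F p v) (x, t)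
      = (ContinuousLinearMap.apply ℝ ℂ v).comp (fderiv ℝ (fun p => fderiv ℝ F p) (x, t)) := by
    intro v
    exact (((ContinuousLinearMap.apply ℝ ℂ v).hasFDerivAt).comp (x, t)
      hdiffG.hasFDerivAt).fderiv
  have hsymm : fderiv ℝ (fderiv ℝ F) (x, t) (0, 1) (1, 0)
      = fderiv ℝ (fderiv ℝ F) (x, t) (1, 0) (0, 1) :=
    (hF.contDiffAt.isSymmSndFDerivAt (by rw [minSmoothness_of_isRCLikeNormedField]; exact WithTop.coe_le_coe.mpr (le_top : (2 : ℕ∞) ≤ ⊤))).eq _ _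
  calc deriv (fun t' => deriv (fun x' => F (x', t')) x) t
      = deriv (fun t' => fderiv ℝ F (x, t') (1, 0)) t := by
        congr 1; funext t'; exact pderiv1_eq hF x t'
    _ = fderiv ℝ (fun p => fderiv ℝ F p (1, 0)) (x, t) (0, 1) :=
        pderiv2_eq (contDiff_fderiv_apply hF (1, 0)) x t
    _ = fderiv ℝ (fderiv ℝ F) (x, t) (0, 1) (1, 0) := by rw [hfd]; rfl
    _ = fderiv ℝ (fderiv ℝ F) (x, t) (1, 0) (0, 1) := hsymm
    _ = fderiv ℝ (fun p => fderiv ℝ F p (0, 1)) (x, t) (1, 0) := by rw [hfd]; rfl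
    _ = deriv (fun x' => fderiv ℝ F (x', t) (0, 1)) x :=
        (pderiv1_eq (contDiff_fderiv_apply hF (0, 1)) x t).symm
    _ = deriv (fun x' => deriv (fun t' => F (x', t')) t) x := by
        congr 1; funext x'; exact (pderiv2_eq hF x' t).symm


def Sm (f : ℝ → ℝ → Matrix (Fin n) (Fin n) ℂ) : Prop :=
  ∀ i j, ContDiff ℝ (⊤ : ℕ∞) (fun p : ℝ × ℝ => f p.1 p.2 i j)

variable {f h : ℝ → ℝ → Matrix (Fin n) (Fin n) ℂ}

lemma Sm.diffX (hf : Sm f) (t : ℝ) (i j : Fin n) (x : ℝ) :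
    DifferentiableAt ℝ (fun x' => f x' t i j) x :=
  ((slice1 (hf i j) t).differentiable (by simp)) x

lemma Sm.diffT (hf : Sm f) (x : ℝ) (i j : Fin n) (t : ℝ) :
    DifferentiableAt ℝ (fun t' => f x t' i j) t :=
  ((slice2 (hf i j) x).differentiable (by simp)) t

lemma Sm.pX (hf : Sm f) : Sm (_root_.pX f) := by
  intro i j
  have := contDiff_pd1 (hf i j)
  simpa [_root_.pX] using this

lemma Sm.pT (hf : Sm f) : Sm (_root_.pT f) := by
  intro i j
  have := contDiff_pd2 (hf i j)
  simpa [_root_.pT] using this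

lemma Sm.mul (hf : Sm f) (hh : Sm h) : Sm (fun x t => f x t * h x t) := by
  intro i j
  simp only [Matrix.mul_apply]
  exact ContDiff.sum fun k _ => (hf i k).mul (hh k j)

lemma Sm.add (hf : Sm f) (hh : Sm h) : Sm (fun x t => f x t + h x t) := by
  intro i j
  exact (hf i j).add (hh i j)

lemma Sm.sub (hf : Sm f) (hh : Sm h) : Sm (fun x t => f x t - h x t) := by
  intro i j
  exact (hf i j).sub (hh i j)

lemma pX_add (hf : Sm f) (hh : Sm h) (x t : ℝ) :
    pX (fun a b => f a b + h a b) x t = pX f x t + pX h x t := by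
  ext i j
  simp only [pX, Matrix.of_apply, Matrix.add_apply]
  exact deriv_add (hf.diffX t i j x) (hh.diffX t i j x)

lemma pT_add (hf : Sm f) (hh : Sm h) (x t : ℝ) :
    pT (fun a b => f a b + h a b) x t = pT f x t + pT h x t := by
  ext i j
  simp only [pT, Matrix.of_apply, Matrix.add_apply]
  exact deriv_add (hf.diffT x i j t) (hh.diffT x i j t)

lemma pX_sub (hf : Sm f) (hh : Sm h) (x t : ℝ) :
    pX (fun a b => f a b - h a b) x t = pX f x t - pX h x t := by
  ext i j
  simp only [pX, Matrix.of_apply, Matrix.sub_apply]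
  exact deriv_sub (hf.diffX t i j x) (hh.diffX t i j x)

lemma pT_sub (hf : Sm f) (hh : Sm h) (x t : ℝ) :
    pT (fun a b => f a b - h a b) x t = pT f x t - pT h x t := by
  ext i j
  simp only [pT, Matrix.of_apply, Matrix.sub_apply]
  exact deriv_sub (hf.diffT x i j t) (hh.diffT x i j t)

lemma pX_neg (x t : ℝ) :
    pX (fun a b => -(f a b)) x t = -pX f x t := by
  ext i j
  simp only [pX, Matrix.of_apply, Matrix.neg_apply]
  exact deriv.neg

lemma pX_mul (hf : Sm f) (hh : Sm h) (x t : ℝ) :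
    pX (fun a b => f a b * h a b) x t = pX f x t * h x t + f x t * pX h x t := by
  ext i j
  simp only [pX, Matrix.of_apply, Matrix.add_apply, Matrix.mul_apply]
  rw [deriv_fun_sum (A := fun k x' => f x' t i k * h x' t k j) fun k _ => ((hf.diffX t i k x).mul (hh.diffX t k j x))]
  rw [← Finset.sum_add_distrib]
  refine Finset.sum_congr rfl fun k _ => ?_
  exact deriv_mul (hf.diffX t i k x) (hh.diffX t k j x)

lemma pT_mul (hf : Sm f) (hh : Sm h) (x t : ℝ) :
    pT (fun a b => f a b * h a b) x t = pT f x t * h x t + f x t * pT h x t := by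
  ext i j
  simp only [pT, Matrix.of_apply, Matrix.add_apply, Matrix.mul_apply]
  rw [deriv_fun_sum (A := fun k t' => f x t' i k * h x t' k j) fun k _ => ((hf.diffT x i k t).mul (hh.diffT x k j t))]
  rw [← Finset.sum_add_distrib]
  refine Finset.sum_congr rfl fun k _ => ?_
  exact deriv_mul (hf.diffT x i k t) (hh.diffT x k j t)

lemma pT_pX_comm (hf : Sm f) (x t : ℝ) :
    pT (pX f) x t = pX (pT f) x t := by
  ext i j
  simp only [pT, pX, Matrix.of_apply]
  exact clairaut (hf i j) x t

variable {M : ℝ × ℝ → Matrix (Fin n) (Fin n) ℂ}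

lemma contDiff_det (hM : ∀ i j, ContDiff ℝ (⊤ : ℕ∞) (fun p => M p i j)) :
    ContDiff ℝ (⊤ : ℕ∞) (fun p => (M p).det) := by
  have e : (fun p => (M p).det)
      = fun p => ∑ σ : Equiv.Perm (Fin n), ((Equiv.Perm.sign σ : ℤ) : ℂ) * ∏ i, M p (σ i) i :=
    funext fun p => Matrix.det_apply' (M p)
  rw [e]
  refine ContDiff.sum fun σ _ => contDiff_const.mul ?_
  exact contDiff_prod fun i _ => hM (σ i) i

lemma contDiff_inv_entry (hM : ∀ i j, ContDiff ℝ (⊤ : ℕ∞) (fun p => M p i j))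
    (hU : ∀ p, IsUnit (M p)) (i j : Fin n) :
    ContDiff ℝ (⊤ : ℕ∞) (fun p => (M p)⁻¹ i j) := by
  have hdet : ContDiff ℝ (⊤ : ℕ∞) (fun p => (M p).det) := contDiff_det hM
  have hne : ∀ p, (M p).det ≠ 0 := fun p =>
    IsUnit.ne_zero ((Matrix.isUnit_iff_isUnit_det (M p)).1 (hU p))
  have hinvdet : ContDiff ℝ (⊤ : ℕ∞) (fun p => ((M p).det)⁻¹ ) := by
    rw [contDiff_iff_contDiffAt]
    exact fun p => (hdet.contDiffAt).inv (hne p)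
  have hadj : ContDiff ℝ (⊤ : ℕ∞) (fun p => (M p).adjugate i j) := by
    have e : (fun p => (M p).adjugate i j)
        = fun p => ((M p).updateRow j (Pi.single i 1)).det :=
      funext fun p => Matrix.adjugate_apply (M p) i j
    rw [e]
    refine contDiff_det fun k l => ?_
    rcases eq_or_ne k j with rfl | hk
    · simpa using contDiff_const
    · have e2 : (fun p => (M p).updateRow j (Pi.single i 1) k l) = fun p => M p k l :=
        funext fun p => congrFun (Matrix.updateRow_ne hk) l
      rw [e2]; exact hM k l
  have e : (fun p => (M p)⁻¹ i j) = fun p => ((M p).det)⁻¹ * (M p).adjugate i j := by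
    funext p
    rw [Matrix.inv_def, Matrix.smul_apply, Ring.inverse_eq_inv', smul_eq_mul]
  rw [e]
  exact hinvdet.mul hadj

variable {f2 h2 k2 : ℝ → ℝ → Matrix (Fin n) (Fin n) ℂ}

lemma pT_expand (hf : Sm f2) (hh : Sm h2) (hk : Sm k2) (x t : ℝ) :
    pT (fun a b => f2 a b + (h2 a b * k2 a b - k2 a b * h2 a b)) x t
      = pT f2 x t + ((pT h2 x t * k2 x t + h2 x t * pT k2 x t)
        - (pT k2 x t * h2 x t + k2 x t * pT h2 x t)) := by
  rw [pT_add hf ((hh.mul hk).sub (hk.mul hh)), pT_sub (hh.mul hk) (hk.mul hh),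
    pT_mul hh hk, pT_mul hk hh]

lemma pX_nexpand (hf : Sm f2) (hh : Sm h2) (hk : Sm k2) (x t : ℝ) :
    pX (fun a b => -(f2 a b + (h2 a b * k2 a b - k2 a b * h2 a b))) x t
      = -(pX f2 x t + ((pX h2 x t * k2 x t + h2 x t * pX k2 x t)
        - (pX k2 x t * h2 x t + k2 x t * pX h2 x t))) := by
  rw [pX_neg (f := fun a b => f2 a b + (h2 a b * k2 a b - k2 a b * h2 a b)),
    pX_add hf ((hh.mul hk).sub (hk.mul hh)), pX_sub (hh.mul hk) (hk.mul hh),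
    pX_mul hh hk, pX_mul hk hh]

end Aux18
end


open Aux18 in
theorem stmt_18 (g : ℝ → ℝ → Matrix (Fin n) (Fin n) ℂ)
    (hg : ∀ i j, ContDiff ℝ (⊤ : ℕ∞) (fun p : ℝ × ℝ => g p.1 p.2 i j))
    (hginv : ∀ x t, IsUnit (g x t))
    (hchiral : ∀ x t,
      pX (fun a b => (g a b)⁻¹ * pX g a b) x t
        + pT (fun a b => (g a b)⁻¹ * pT g a b) x t = 0)
    (Φ Φ' : ℝ → ℝ → Matrix (Fin n) (Fin n) ℂ)
    (hΦ : ∀ i j, ContDiff ℝ (⊤ : ℕ∞) (fun p : ℝ × ℝ => Φ p.1 p.2 i j))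
    (hΦ' : ∀ i j, ContDiff ℝ (⊤ : ℕ∞) (fun p : ℝ × ℝ => Φ' p.1 p.2 i j))
    (hBT1 : ∀ x t, pX Φ' x t = pT Φ x t + mcomm ((g x t)⁻¹ * pT g x t) (Φ x t))
    (hBT2 : ∀ x t, -pT Φ' x t = pX Φ x t + mcomm ((g x t)⁻¹ * pX g x t) (Φ x t)) :
    ∀ x t, pX (pX Φ) x t + pT (pT Φ) x t
      + mcomm ((g x t)⁻¹ * pX g x t) (pX Φ x t)
      + mcomm ((g x t)⁻¹ * pT g x t) (pT Φ x t) = 0 := by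
  intro x t
  have hSg : Sm g := hg
  have hSΦ : Sm Φ := hΦ
  have hSΦ' : Sm Φ' := hΦ'
  have hSginv : Sm (fun a b => (g a b)⁻¹) := fun i j =>
    contDiff_inv_entry (M := fun p : ℝ × ℝ => g p.1 p.2) hg (fun p => hginv p.1 p.2) i j
  have hA : Sm (fun a b => (g a b)⁻¹ * pX g a b) := hSginv.mul hSg.pX
  have hB : Sm (fun a b => (g a b)⁻¹ * pT g a b) := hSginv.mul hSg.pT
  have E1 : pX Φ' = fun a b => pT Φ a b
      + ((g a b)⁻¹ * pT g a b * Φ a b - Φ a b * ((g a b)⁻¹ * pT g a b)) := by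
    funext a b
    rw [hBT1 a b]; rfl
  have E2 : pT Φ' = fun a b => -(pX Φ a b
      + ((g a b)⁻¹ * pX g a b * Φ a b - Φ a b * ((g a b)⁻¹ * pX g a b))) := by
    funext a b
    have := neg_eq_iff_eq_neg.mp (hBT2 a b)
    rw [this]; rfl
  have key := pT_pX_comm hSΦ' x t
  rw [E1, E2] at key
  rw [pT_expand hSΦ.pT hB hSΦ x t, pX_nexpand hSΦ.pX hA hSΦ x t] at key
  have hch := hchiral x t
  have final : pX (pX Φ) x t + pT (pT Φ) x t
      + mcomm ((g x t)⁻¹ * pX g x t) (pX Φ x t)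
      + mcomm ((g x t)⁻¹ * pT g x t) (pT Φ x t)
      = ((pT (pT Φ) x t + ((pT (fun a b => (g a b)⁻¹ * pT g a b) x t * Φ x t
            + (fun a b => (g a b)⁻¹ * pT g a b) x t * pT Φ x t)
          - (pT Φ x t * (fun a b => (g a b)⁻¹ * pT g a b) x t
            + Φ x t * pT (fun a b => (g a b)⁻¹ * pT g a b) x t)))
        - (-(pX (pX Φ) x t + ((pX (fun a b => (g a b)⁻¹ * pX g a b) x t * Φ x t
            + (fun a b => (g a b)⁻¹ * pX g a b) x t * pX Φ x t)
          - (pX Φ x t * (fun a b => (g a b)⁻¹ * pX g a b) x t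
            + Φ x t * pX (fun a b => (g a b)⁻¹ * pX g a b) x t)))))
        - ((pX (fun a b => (g a b)⁻¹ * pX g a b) x t
            + pT (fun a b => (g a b)⁻¹ * pT g a b) x t) * Φ x t
          - Φ x t * (pX (fun a b => (g a b)⁻¹ * pX g a b) x t
            + pT (fun a b => (g a b)⁻¹ * pT g a b) x t)) := by
    simp only [mcomm]
    noncomm_ring
  rw [final, key, hch]
  simp
end

section
/- Let g : ℝ² → GL(n, ℂ) be smooth and satisfy the chiral field equation (g⁻¹g_x)_x + (g⁻¹g_t)_t = 0, and let X : ℝ² → M_n(ℂ) be a smooth potential satisfying X_x = g⁻¹g_t and X_t = −g⁻¹g_x. Then for any constant matrix M, the function Φ' = [X, M] satisfies the symmetry condition Φ'_xx + Φ'_tt + [g⁻¹g_x, Φ'_x] + [g⁻¹g_t, Φ'_t] = 0. -/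
open Matrix

variable {n : ℕ}

section Aux

open scoped ContDiff

lemma aux_one_le_inf : (1 : WithTop ℕ∞) ≤ ∞ := by
  rw [show ((1 : WithTop ℕ∞)) = ((1 : ℕ∞) : WithTop ℕ∞) from rfl]
  exact WithTop.coe_le_coe.2 le_top

lemma aux_two_le_inf : (2 : WithTop ℕ∞) ≤ ∞ := by
  rw [show ((2 : WithTop ℕ∞)) = ((2 : ℕ∞) : WithTop ℕ∞) from rfl]
  exact WithTop.coe_le_coe.2 le_top

lemma aux_inf_add_one_le : ∞ + 1 ≤ ∞ := by
  rw [show ((1 : WithTop ℕ∞)) = ((1 : ℕ∞) : WithTop ℕ∞) from rfl, ← WithTop.coe_add]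
  exact WithTop.coe_le_coe.2 le_top

/-- Entrywise smoothness of a matrix-valued function of two real variables. -/
def Sm (f : ℝ → ℝ → Matrix (Fin n) (Fin n) ℂ) : Prop :=
  ∀ i j, ContDiff ℝ ∞ fun p : ℝ × ℝ => f p.1 p.2 i j

lemma deriv_sliceX {F : ℝ × ℝ → ℂ} {x t : ℝ} (hF : DifferentiableAt ℝ F (x, t)) :
    deriv (fun x' => F (x', t)) x = fderiv ℝ F (x, t) (1, 0) := by
  have h : HasFDerivAt (fun x' : ℝ => (x', t)) ((ContinuousLinearMap.id ℝ ℝ).prod 0) x :=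
    (hasFDerivAt_id x).prodMk (hasFDerivAt_const t x)
  simpa [Function.comp_def] using ((hF.hasFDerivAt.comp x h).hasDerivAt).deriv

lemma deriv_sliceT {F : ℝ × ℝ → ℂ} {x t : ℝ} (hF : DifferentiableAt ℝ F (x, t)) :
    deriv (fun t' => F (x, t')) t = fderiv ℝ F (x, t) (0, 1) := by
  have h : HasFDerivAt (fun t' : ℝ => (x, t'))
      ((0 : ℝ →L[ℝ] ℝ).prod (ContinuousLinearMap.id ℝ ℝ)) t :=
    (hasFDerivAt_const x t).prodMk (hasFDerivAt_id t)
  simpa [Function.comp_def] using ((hF.hasFDerivAt.comp t h).hasDerivAt).deriv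

lemma Sm.dX {f : ℝ → ℝ → Matrix (Fin n) (Fin n) ℂ} (hf : Sm f) (t : ℝ) (i j : Fin n) (x : ℝ) :
    DifferentiableAt ℝ (fun y => f y t i j) x := by
  have h1 : Differentiable ℝ (fun p : ℝ × ℝ => f p.1 p.2 i j) :=
    (hf i j).differentiable (by simp)
  exact (h1.comp (differentiable_id.prodMk (differentiable_const t))).differentiableAt

lemma Sm.dT {f : ℝ → ℝ → Matrix (Fin n) (Fin n) ℂ} (hf : Sm f) (x : ℝ) (i j : Fin n) (t : ℝ) :
    DifferentiableAt ℝ (fun y => f x y i j) t := by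
  have h1 : Differentiable ℝ (fun p : ℝ × ℝ => f p.1 p.2 i j) :=
    (hf i j).differentiable (by simp)
  exact (h1.comp ((differentiable_const x).prodMk differentiable_id)).differentiableAt

lemma pX_apply_eq {f : ℝ → ℝ → Matrix (Fin n) (Fin n) ℂ} (hf : Sm f) (x t : ℝ) (i j : Fin n) :
    pX f x t i j = fderiv ℝ (fun p : ℝ × ℝ => f p.1 p.2 i j) (x, t) (1, 0) :=
  deriv_sliceX (((hf i j).differentiable (by simp)) (x, t))

lemma pT_apply_eq {f : ℝ → ℝ → Matrix (Fin n) (Fin n) ℂ} (hf : Sm f) (x t : ℝ) (i j : Fin n) :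
    pT f x t i j = fderiv ℝ (fun p : ℝ × ℝ => f p.1 p.2 i j) (x, t) (0, 1) :=
  deriv_sliceT (((hf i j).differentiable (by simp)) (x, t))

lemma Sm.pX' {f : ℝ → ℝ → Matrix (Fin n) (Fin n) ℂ} (hf : Sm f) : Sm (pX f) := by
  intro i j
  have h1 : ContDiff ℝ ∞ fun p : ℝ × ℝ =>
      fderiv ℝ (fun q : ℝ × ℝ => f q.1 q.2 i j) p (1, 0) :=
    ((hf i j).fderiv_right aux_inf_add_one_le).clm_apply contDiff_const
  have h2 : (fun p : ℝ × ℝ => pX f p.1 p.2 i j)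
      = fun p : ℝ × ℝ => fderiv ℝ (fun q : ℝ × ℝ => f q.1 q.2 i j) p (1, 0) :=
    funext fun p => pX_apply_eq hf p.1 p.2 i j
  rw [show (fun p : ℝ × ℝ => pX f p.1 p.2 i j)
      = fun p : ℝ × ℝ => fderiv ℝ (fun q : ℝ × ℝ => f q.1 q.2 i j) p (1, 0) from h2]
  exact h1

lemma Sm.pT' {f : ℝ → ℝ → Matrix (Fin n) (Fin n) ℂ} (hf : Sm f) : Sm (pT f) := by
  intro i j
  have h1 : ContDiff ℝ ∞ fun p : ℝ × ℝ =>
      fderiv ℝ (fun q : ℝ × ℝ => f q.1 q.2 i j) p (0, 1) :=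
    ((hf i j).fderiv_right aux_inf_add_one_le).clm_apply contDiff_const
  have h2 : (fun p : ℝ × ℝ => pT f p.1 p.2 i j)
      = fun p : ℝ × ℝ => fderiv ℝ (fun q : ℝ × ℝ => f q.1 q.2 i j) p (0, 1) :=
    funext fun p => pT_apply_eq hf p.1 p.2 i j
  rw [show (fun p : ℝ × ℝ => pT f p.1 p.2 i j)
      = fun p : ℝ × ℝ => fderiv ℝ (fun q : ℝ × ℝ => f q.1 q.2 i j) p (0, 1) from h2]
  exact h1

/-- One-dimensional entrywise derivative of a matrix-valued curve. -/
noncomputable def dm (F : ℝ → Matrix (Fin n) (Fin n) ℂ) (x : ℝ) : Matrix (Fin n) (Fin n) ℂ :=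
  Matrix.of fun i j => deriv (fun y => F y i j) x

lemma dm_const (A : Matrix (Fin n) (Fin n) ℂ) (x : ℝ) : dm (fun _ => A) x = 0 := by
  ext i j
  simp [dm]

lemma dm_mul (F H : ℝ → Matrix (Fin n) (Fin n) ℂ) (x : ℝ)
    (hF : ∀ i j, DifferentiableAt ℝ (fun y => F y i j) x)
    (hH : ∀ i j, DifferentiableAt ℝ (fun y => H y i j) x) :
    dm (fun y => F y * H y) x = dm F x * H x + F x * dm H x := by
  ext i j
  have h1 : (fun y => (F y * H y) i j) = fun y => ∑ k, F y i k * H y k j :=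
    funext fun y => Matrix.mul_apply
  simp only [dm, Matrix.of_apply, Matrix.add_apply, Matrix.mul_apply, h1]
  rw [deriv_fun_sum (fun k _ => ((hF i k).fun_mul (hH k j))), ← Finset.sum_add_distrib]
  refine Finset.sum_congr rfl fun k _ => ?_
  rw [deriv_fun_mul (hF i k) (hH k j)]

lemma dm_sub (F H : ℝ → Matrix (Fin n) (Fin n) ℂ) (x : ℝ)
    (hF : ∀ i j, DifferentiableAt ℝ (fun y => F y i j) x)
    (hH : ∀ i j, DifferentiableAt ℝ (fun y => H y i j) x) :
    dm (fun y => F y - H y) x = dm F x - dm H x := by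
  ext i j
  have h1 : (fun y => (F y - H y) i j) = fun y => F y i j - H y i j :=
    funext fun y => Matrix.sub_apply _ _ _ _
  simp only [dm, Matrix.of_apply, Matrix.sub_apply, h1]
  exact deriv_sub (hF i j) (hH i j)

lemma dm_neg (F : ℝ → Matrix (Fin n) (Fin n) ℂ) (x : ℝ) :
    dm (fun y => -(F y)) x = -(dm F x) := by
  ext i j
  have h1 : (fun y => (-(F y)) i j) = fun y => -(F y i j) :=
    funext fun y => Matrix.neg_apply _ _ _
  simp only [dm, Matrix.of_apply, Matrix.neg_apply, h1]
  exact deriv.neg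

lemma dm_mcomm (F : ℝ → Matrix (Fin n) (Fin n) ℂ) (M : Matrix (Fin n) (Fin n) ℂ) (x : ℝ)
    (hF : ∀ i j, DifferentiableAt ℝ (fun y => F y i j) x) :
    dm (fun y => mcomm (F y) M) x = mcomm (dm F x) M := by
  have hFM : ∀ i j, DifferentiableAt ℝ (fun y => (F y * M) i j) x := by
    intro i j
    have h1 : (fun y => (F y * M) i j) = fun y => ∑ k, F y i k * M k j :=
      funext fun y => Matrix.mul_apply
    rw [h1]
    exact DifferentiableAt.fun_sum fun k _ => (hF i k).mul_const _
  have hMF : ∀ i j, DifferentiableAt ℝ (fun y => (M * F y) i j) x := by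
    intro i j
    have h1 : (fun y => (M * F y) i j) = fun y => ∑ k, M i k * F y k j :=
      funext fun y => Matrix.mul_apply
    rw [h1]
    exact DifferentiableAt.fun_sum fun k _ => (hF k j).const_mul _
  calc dm (fun y => mcomm (F y) M) x
      = dm (fun y => F y * M - M * F y) x := rfl
    _ = dm (fun y => F y * M) x - dm (fun y => M * F y) x := dm_sub _ _ x hFM hMF
    _ = (dm F x * M + F x * dm (fun _ => M) x)
        - (dm (fun _ => M) x * F x + M * dm F x) := by
          rw [dm_mul F (fun _ => M) x hF (fun i j => differentiableAt_const _),
            dm_mul (fun _ => M) F x (fun i j => differentiableAt_const _) hF]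
    _ = mcomm (dm F x) M := by rw [dm_const]; simp [mcomm]

lemma pX_mcomm {f : ℝ → ℝ → Matrix (Fin n) (Fin n) ℂ} (hf : Sm f)
    (M : Matrix (Fin n) (Fin n) ℂ) (x t : ℝ) :
    pX (fun a b => mcomm (f a b) M) x t = mcomm (pX f x t) M :=
  dm_mcomm (fun y => f y t) M x (fun i j => hf.dX t i j x)

lemma pT_mcomm {f : ℝ → ℝ → Matrix (Fin n) (Fin n) ℂ} (hf : Sm f)
    (M : Matrix (Fin n) (Fin n) ℂ) (x t : ℝ) :
    pT (fun a b => mcomm (f a b) M) x t = mcomm (pT f x t) M :=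
  dm_mcomm (fun y => f x y) M t (fun i j => hf.dT x i j t)

lemma pX_mul {f h : ℝ → ℝ → Matrix (Fin n) (Fin n) ℂ} (hf : Sm f) (hh : Sm h) (x t : ℝ) :
    pX (fun a b => f a b * h a b) x t = pX f x t * h x t + f x t * pX h x t :=
  dm_mul (fun y => f y t) (fun y => h y t) x (fun i j => hf.dX t i j x)
    (fun i j => hh.dX t i j x)

lemma pT_mul {f h : ℝ → ℝ → Matrix (Fin n) (Fin n) ℂ} (hf : Sm f) (hh : Sm h) (x t : ℝ) :
    pT (fun a b => f a b * h a b) x t = pT f x t * h x t + f x t * pT h x t :=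
  dm_mul (fun y => f x y) (fun y => h x y) t (fun i j => hf.dT x i j t)
    (fun i j => hh.dT x i j t)

lemma pT_neg {f : ℝ → ℝ → Matrix (Fin n) (Fin n) ℂ} (x t : ℝ) :
    pT (fun a b => -(f a b)) x t = -(pT f x t) :=
  dm_neg (fun y => f x y) t

lemma pX_const (A : Matrix (Fin n) (Fin n) ℂ) (x t : ℝ) : pX (fun _ _ => A) x t = 0 :=
  dm_const A x

lemma pT_const (A : Matrix (Fin n) (Fin n) ℂ) (x t : ℝ) : pT (fun _ _ => A) x t = 0 :=
  dm_const A t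

lemma Sm.mul {f h : ℝ → ℝ → Matrix (Fin n) (Fin n) ℂ} (hf : Sm f) (hh : Sm h) :
    Sm (fun a b => f a b * h a b) := by
  intro i j
  have h1 : (fun p : ℝ × ℝ => (f p.1 p.2 * h p.1 p.2) i j)
      = fun p : ℝ × ℝ => ∑ k, f p.1 p.2 i k * h p.1 p.2 k j :=
    funext fun p => Matrix.mul_apply
  show ContDiff ℝ ∞ fun p : ℝ × ℝ => (f p.1 p.2 * h p.1 p.2) i j
  rw [h1]
  exact ContDiff.sum fun k _ => (hf i k).mul (hh k j)

lemma Sm.neg {f : ℝ → ℝ → Matrix (Fin n) (Fin n) ℂ} (hf : Sm f) :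
    Sm (fun a b => -(f a b)) := fun i j => (hf i j).neg

lemma contDiff_det {A : ℝ × ℝ → Matrix (Fin n) (Fin n) ℂ}
    (hA : ∀ i j, ContDiff ℝ ∞ fun p => A p i j) :
    ContDiff ℝ ∞ fun p => (A p).det := by
  have h1 : (fun p => (A p).det)
      = fun p => ∑ σ : Equiv.Perm (Fin n),
          ((Equiv.Perm.sign σ : ℤ) : ℂ) * ∏ i, A p (σ i) i := by
    funext p
    rw [Matrix.det_apply]
    simp [Units.smul_def, zsmul_eq_mul]
  rw [h1]
  exact ContDiff.sum fun σ _ => contDiff_const.mul (contDiff_prod fun i _ => hA (σ i) i)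

lemma Sm.inv {g : ℝ → ℝ → Matrix (Fin n) (Fin n) ℂ} (hg : Sm g)
    (hu : ∀ x t, IsUnit (g x t)) : Sm (fun a b => (g a b)⁻¹) := by
  intro i j
  have hdu : ∀ p : ℝ × ℝ, IsUnit (g p.1 p.2).det :=
    fun p => (Matrix.isUnit_iff_isUnit_det _).1 (hu p.1 p.2)
  have hdet : ContDiff ℝ ∞ fun p : ℝ × ℝ => (g p.1 p.2).det :=
    contDiff_det fun i j => hg i j
  have hadj : ContDiff ℝ ∞ fun p : ℝ × ℝ => (g p.1 p.2).adjugate i j := by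
    have h1 : (fun p : ℝ × ℝ => (g p.1 p.2).adjugate i j)
        = fun p : ℝ × ℝ => ((g p.1 p.2).updateRow j (Pi.single i 1)).det := by
      funext p
      rw [Matrix.adjugate_apply]
    rw [h1]
    apply contDiff_det
    intro k l
    by_cases hkj : k = j
    · simp only [hkj, Matrix.updateRow_apply, if_pos rfl]
      exact contDiff_const
    · simp only [Matrix.updateRow_apply, if_neg hkj]
      exact hg k l
  have h2 : (fun p : ℝ × ℝ => (g p.1 p.2)⁻¹ i j)
      = fun p : ℝ × ℝ => ((g p.1 p.2).det)⁻¹ * (g p.1 p.2).adjugate i j := by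
    funext p
    rw [Matrix.inv_def]
    simp [Ring.inverse_eq_inv', Matrix.smul_apply, smul_eq_mul]
  show ContDiff ℝ ∞ fun p : ℝ × ℝ => (g p.1 p.2)⁻¹ i j
  rw [h2]
  exact (hdet.inv fun p => (hdu p).ne_zero).mul hadj

lemma pX_inv {g : ℝ → ℝ → Matrix (Fin n) (Fin n) ℂ} (hg : Sm g)
    (hu : ∀ x t, IsUnit (g x t)) (x t : ℝ) :
    pX (fun a b => (g a b)⁻¹) x t = -((g x t)⁻¹ * pX g x t * (g x t)⁻¹) := by
  have hdu : ∀ a b, IsUnit (g a b).det :=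
    fun a b => (Matrix.isUnit_iff_isUnit_det _).1 (hu a b)
  have hSi : Sm (fun a b => (g a b)⁻¹) := hg.inv hu
  have h1 : (fun a b => (g a b)⁻¹ * g a b) = fun _ _ => (1 : Matrix (Fin n) (Fin n) ℂ) := by
    funext a b
    exact Matrix.nonsing_inv_mul _ (hdu a b)
  have h2 : pX (fun a b => (g a b)⁻¹ * g a b) x t = 0 := by
    rw [h1]
    exact pX_const 1 x t
  have h3 := pX_mul hSi hg x t
  rw [h2] at h3
  have h4 : pX (fun a b => (g a b)⁻¹) x t * g x t = -((g x t)⁻¹ * pX g x t) :=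
    eq_neg_of_add_eq_zero_left h3.symm
  calc pX (fun a b => (g a b)⁻¹) x t
      = pX (fun a b => (g a b)⁻¹) x t * (g x t * (g x t)⁻¹) := by
        rw [Matrix.mul_nonsing_inv _ (hdu x t), mul_one]
    _ = (pX (fun a b => (g a b)⁻¹) x t * g x t) * (g x t)⁻¹ := by rw [mul_assoc]
    _ = -((g x t)⁻¹ * pX g x t) * (g x t)⁻¹ := by rw [h4]
    _ = -((g x t)⁻¹ * pX g x t * (g x t)⁻¹) := by rw [neg_mul]

lemma pT_inv {g : ℝ → ℝ → Matrix (Fin n) (Fin n) ℂ} (hg : Sm g)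
    (hu : ∀ x t, IsUnit (g x t)) (x t : ℝ) :
    pT (fun a b => (g a b)⁻¹) x t = -((g x t)⁻¹ * pT g x t * (g x t)⁻¹) := by
  have hdu : ∀ a b, IsUnit (g a b).det :=
    fun a b => (Matrix.isUnit_iff_isUnit_det _).1 (hu a b)
  have hSi : Sm (fun a b => (g a b)⁻¹) := hg.inv hu
  have h1 : (fun a b => (g a b)⁻¹ * g a b) = fun _ _ => (1 : Matrix (Fin n) (Fin n) ℂ) := by
    funext a b
    exact Matrix.nonsing_inv_mul _ (hdu a b)
  have h2 : pT (fun a b => (g a b)⁻¹ * g a b) x t = 0 := by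
    rw [h1]
    exact pT_const 1 x t
  have h3 := pT_mul hSi hg x t
  rw [h2] at h3
  have h4 : pT (fun a b => (g a b)⁻¹) x t * g x t = -((g x t)⁻¹ * pT g x t) :=
    eq_neg_of_add_eq_zero_left h3.symm
  calc pT (fun a b => (g a b)⁻¹) x t
      = pT (fun a b => (g a b)⁻¹) x t * (g x t * (g x t)⁻¹) := by
        rw [Matrix.mul_nonsing_inv _ (hdu x t), mul_one]
    _ = (pT (fun a b => (g a b)⁻¹) x t * g x t) * (g x t)⁻¹ := by rw [mul_assoc]
    _ = -((g x t)⁻¹ * pT g x t) * (g x t)⁻¹ := by rw [h4]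
    _ = -((g x t)⁻¹ * pT g x t * (g x t)⁻¹) := by rw [neg_mul]

lemma clairaut {F : ℝ × ℝ → ℂ} (hF : ContDiff ℝ ∞ F) (x t : ℝ) :
    deriv (fun x' => deriv (fun t' => F (x', t')) t) x
      = deriv (fun t' => deriv (fun x' => F (x', t')) x) t := by
  have hdF : ContDiff ℝ ∞ (fderiv ℝ F) := hF.fderiv_right aux_inf_add_one_le
  have hdiff : Differentiable ℝ F := hF.differentiable (by simp)
  have hd2 : Differentiable ℝ (fderiv ℝ F) := hdF.differentiable (by simp)
  have hA : ∀ v : ℝ × ℝ, Differentiable ℝ fun p : ℝ × ℝ => fderiv ℝ F p v := fun v =>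
    (hdF.clm_apply contDiff_const).differentiable (by simp)
  have e1 : (fun x' => deriv (fun t' => F (x', t')) t)
      = fun x' => fderiv ℝ F (x', t) (0, 1) :=
    funext fun x' => deriv_sliceT (hdiff (x', t))
  have e2 : (fun t' => deriv (fun x' => F (x', t')) x)
      = fun t' => fderiv ℝ F (x, t') (1, 0) :=
    funext fun t' => deriv_sliceX (hdiff (x, t'))
  have e3 : deriv (fun x' => fderiv ℝ F (x', t) (0, 1)) x
      = fderiv ℝ (fun p : ℝ × ℝ => fderiv ℝ F p (0, 1)) (x, t) (1, 0) :=
    deriv_sliceX ((hA (0, 1)) (x, t))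
  have e4 : deriv (fun t' => fderiv ℝ F (x, t') (1, 0)) t
      = fderiv ℝ (fun p : ℝ × ℝ => fderiv ℝ F p (1, 0)) (x, t) (0, 1) :=
    deriv_sliceT ((hA (1, 0)) (x, t))
  have key : ∀ (v p : ℝ × ℝ), fderiv ℝ (fun q : ℝ × ℝ => fderiv ℝ F q v) p
      = (fderiv ℝ (fderiv ℝ F) p).flip v := by
    intro v p
    rw [fderiv_clm_apply (hd2 p) (differentiableAt_const v)]
    simp
  have hsym := hF.contDiffAt.isSymmSndFDerivAt (by rw [minSmoothness_of_isRCLikeNormedField]; exact aux_two_le_inf) (x := (x, t))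
  rw [e1, e2, e3, e4, key, key]
  simp only [ContinuousLinearMap.flip_apply]
  exact hsym _ _

lemma pX_pT {g : ℝ → ℝ → Matrix (Fin n) (Fin n) ℂ} (hg : Sm g) (x t : ℝ) :
    pX (pT g) x t = pT (pX g) x t := by
  ext i j
  exact clairaut (hg i j) x t

end Aux

theorem stmt_19 (g : ℝ → ℝ → Matrix (Fin n) (Fin n) ℂ)
    (hg : ∀ i j, ContDiff ℝ (⊤ : ℕ∞) (fun p : ℝ × ℝ => g p.1 p.2 i j))
    (hginv : ∀ x t, IsUnit (g x t))
    (hchiral : ∀ x t,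
      pX (fun a b => (g a b)⁻¹ * pX g a b) x t
        + pT (fun a b => (g a b)⁻¹ * pT g a b) x t = 0)
    (X : ℝ → ℝ → Matrix (Fin n) (Fin n) ℂ)
    (hX : ∀ i j, ContDiff ℝ (⊤ : ℕ∞) (fun p : ℝ × ℝ => X p.1 p.2 i j))
    (hX1 : ∀ x t, pX X x t = (g x t)⁻¹ * pT g x t)
    (hX2 : ∀ x t, pT X x t = -((g x t)⁻¹ * pX g x t))
    (M : Matrix (Fin n) (Fin n) ℂ)
    (Φ' : ℝ → ℝ → Matrix (Fin n) (Fin n) ℂ)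
    (hΦ' : Φ' = fun x t => mcomm (X x t) M) :
    ∀ x t, pX (pX Φ') x t + pT (pT Φ') x t
      + mcomm ((g x t)⁻¹ * pX g x t) (pX Φ' x t)
      + mcomm ((g x t)⁻¹ * pT g x t) (pT Φ' x t) = 0 := by
  intro x t
  have hgS : Sm g := fun i j => (hg i j).of_le (by simp)
  have hXS : Sm X := fun i j => (hX i j).of_le (by simp)
  have hI : Sm (fun a b => (g a b)⁻¹) := hgS.inv hginv
  have hP : Sm (pX g) := hgS.pX'
  have hQ : Sm (pT g) := hgS.pT'
  have hB : Sm (fun a b => (g a b)⁻¹ * pT g a b) := hI.mul hQ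
  have hA : Sm (fun a b => (g a b)⁻¹ * pX g a b) := hI.mul hP
  have e1 : pX Φ' = fun a b => mcomm ((g a b)⁻¹ * pT g a b) M := by
    funext a b
    rw [hΦ', pX_mcomm hXS M a b, hX1 a b]
  have e2 : pT Φ' = fun a b => mcomm (-((g a b)⁻¹ * pX g a b)) M := by
    funext a b
    rw [hΦ', pT_mcomm hXS M a b, hX2 a b]
  have e3 : pX (pX Φ') x t = mcomm (pX (fun a b => (g a b)⁻¹ * pT g a b) x t) M := by
    rw [e1]
    exact pX_mcomm hB M x t
  have e4 : pT (pT Φ') x t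
      = mcomm (pT (fun a b => -((g a b)⁻¹ * pX g a b)) x t) M := by
    rw [e2]
    exact pT_mcomm hA.neg M x t
  have e5 : pT (fun a b => -((g a b)⁻¹ * pX g a b)) x t
      = -(pT (fun a b => (g a b)⁻¹ * pX g a b) x t) := pT_neg x t
  have e6 : pX (fun a b => (g a b)⁻¹ * pT g a b) x t
      = pX (fun a b => (g a b)⁻¹) x t * pT g x t + (g x t)⁻¹ * pX (pT g) x t :=
    pX_mul hI hQ x t
  have e7 : pT (fun a b => (g a b)⁻¹ * pX g a b) x t
      = pT (fun a b => (g a b)⁻¹) x t * pX g x t + (g x t)⁻¹ * pT (pX g) x t :=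
    pT_mul hI hP x t
  have e8 : pX (fun a b => (g a b)⁻¹) x t = -((g x t)⁻¹ * pX g x t * (g x t)⁻¹) :=
    pX_inv hgS hginv x t
  have e9 : pT (fun a b => (g a b)⁻¹) x t = -((g x t)⁻¹ * pT g x t * (g x t)⁻¹) :=
    pT_inv hgS hginv x t
  have e10 : pX (pT g) x t = pT (pX g) x t := pX_pT hgS x t
  have e11 : pX Φ' x t = mcomm ((g x t)⁻¹ * pT g x t) M := by rw [e1]
  have e12 : pT Φ' x t = mcomm (-((g x t)⁻¹ * pX g x t)) M := by rw [e2]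
  rw [e3, e4, e11, e12, e5, e6, e7, e8, e9, e10]
  simp only [mcomm]
  noncomm_ring
end
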